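/- Let n ≥ 1 and let N be a positive integer divisible by 4. Then Σ_{μ∈X_N} q^{(μ,μ+2ρ)} = 0. -/

import Mathlib

open Complex Finset

/-- `qp N r = exp(2πi r / N)`, i.e. `q^r` for `q = exp(2πi/N)`. -/
noncomputable def qp (N : ℕ) (r : ℚ) : ℂ :=
  Complex.exp (2 * (Real.pi : ℂ) * Complex.I * (r : ℂ) / (N : ℂ))

/-- The Weyl vector of `osp(1|2n)`: `ρ_j = n - j + 1/2` for `j = 1, …, n`
(0-indexed: `ρ j = n - j - 1/2`). -/
def rhoV (n : ℕ) : Fin n → ℚ := fun j => (n : ℚ) - (j : ℚ) - 1/2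

/-- The standard dot product on `ℚ^n`. -/
def dotp {n : ℕ} (x y : Fin n → ℚ) : ℚ := ∑ j, x j * y j

/-- Coercion of an integer vector to a rational vector. -/
def intC {n : ℕ} (lam : Fin n → ℤ) : Fin n → ℚ := fun j => (lam j : ℚ)

/-- Coercion of an element of `X_M = {0,…,M-1}^n` to a rational vector. -/
def finC {n M : ℕ} (mu : Fin n → Fin M) : Fin n → ℚ := fun j => ((mu j : ℕ) : ℚ)

/-- The `j`-th standard basis vector of `ℚ^n`. -/
def stdB (n : ℕ) (j : Fin n) : Fin n → ℚ := fun l => if l = j then 1 else 0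

/-- The hyperoctahedral group (Weyl group of `osp(1|2n)`): a permutation with signs. -/
abbrev HypOct (n : ℕ) := Equiv.Perm (Fin n) × (Fin n → ℤˣ)

/-- Action of the hyperoctahedral group on `ℚ^n` by signed permutation of coordinates. -/
def Wact {n : ℕ} (σ : HypOct n) (x : Fin n → ℚ) : Fin n → ℚ :=
  fun j => ((σ.2 j : ℤ) : ℚ) * x (σ.1⁻¹ j)

/-- `ε'(σ) = sgn(π) · ∏_j s_j` for `σ = (π, s)`. -/
def epsW {n : ℕ} (σ : HypOct n) : ℤˣ :=
  Equiv.Perm.sign σ.1 * ∏ j, σ.2 j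

/-- `S'_{λ,μ} = Σ_{σ∈W} ε'(σ) q^{2(λ+ρ, σ(μ+ρ))}` (for rational vectors `λ, μ`). -/
noncomputable def Sprime (n N : ℕ) (lam mu : Fin n → ℚ) : ℂ :=
  ∑ σ : HypOct n,
    ((epsW σ : ℤ) : ℂ) * qp N (2 * dotp (lam + rhoV n) (Wact σ (mu + rhoV n)))

/-- `Q_μ = Σ_{σ∈W} ε'(σ) q^{2(ρ, σ(μ+ρ))}`. -/
noncomputable def Qmu (n N : ℕ) (mu : Fin n → ℤ) : ℂ :=
  ∑ σ : HypOct n,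
    ((epsW σ : ℤ) : ℂ) * qp N (2 * dotp (rhoV n) (Wact σ (intC mu + rhoV n)))

/-- Gauss sum `G(N,m) = Σ_{j=0}^{N-1} q^{j(j+m)}` with `q = exp(2πi/N)`. -/
noncomputable def GaussG (N : ℕ) (m : ℤ) : ℂ :=
  ∑ j : Fin N, qp N ((j : ℚ) * ((j : ℚ) + (m : ℚ)))

/-- `Σ_{μ ∈ X_M} q^{(μ, μ+2ρ)}` where `q = exp(2πi/N)`. -/
noncomputable def sumX (n N M : ℕ) : ℂ :=
  ∑ mu : Fin n → Fin M, qp N (dotp (finC mu) (finC mu + 2 • rhoV n))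

/-- `Σ_{λ ∈ X_M} q^{(λ,λ)} S'_{λ,μ}` where `q = exp(2πi/N)`. -/
noncomputable def sumXS (n N M : ℕ) (mu : Fin n → ℤ) : ℂ :=
  ∑ lam : Fin n → Fin M, qp N (dotp (finC lam) (finC lam)) * Sprime n N (finC lam) (intC mu)

/-! The sum factors over the coordinates into one-variable Gauss sums `Σ_{a mod N} q^{a(a+m)}`
with `m = 2ρ_j` odd. For `N = 4k` and `m = 2t + 1` the shift `a ↦ a + 2k` multiplies each term by
`q^{N(a+k+t) + N/2} = -1`, so the terms cancel in pairs and every factor vanishes. -/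

lemma qp_add (N : ℕ) (r s : ℚ) : qp N (r + s) = qp N r * qp N s := by
  simp only [qp, ← Complex.exp_add]
  push_cast
  ring_nf

lemma qp_sum {ι : Type*} (N : ℕ) (s : Finset ι) (r : ι → ℚ) :
    qp N (∑ i ∈ s, r i) = ∏ i ∈ s, qp N (r i) := by
  simp only [qp, ← Complex.exp_sum]
  push_cast
  rw [mul_sum, sum_div]

lemma qp_natCast_mul_add_half {N : ℕ} (hN : N ≠ 0) (k : ℤ) :
    qp N ((N : ℚ) * ((k : ℚ) + 1 / 2)) = -1 := by
  have h : 2 * (Real.pi : ℂ) * I * (((N : ℚ) * ((k : ℚ) + 1 / 2) : ℚ) : ℂ) / (N : ℂ)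
      = ((2 * k + 1 : ℤ) : ℂ) * ((Real.pi : ℂ) * I) := by
    push_cast
    field_simp
  rw [qp, h, Complex.exp_int_mul, Complex.exp_pi_mul_I]
  exact Odd.neg_one_zpow ⟨k, by ring⟩

lemma Function.Antiperiodic.sum_range_two_mul_eq_zero {M : Type*} [AddCommGroup M] {f : ℕ → M}
    {c : ℕ} (hf : Function.Antiperiodic f c) : ∑ a ∈ range (2 * c), f a = 0 := by
  rw [two_mul, sum_range_add]
  simp only [add_comm c, hf _, sum_neg_distrib, add_neg_cancel]

lemma antiperiodic_qp_mul_add (k : ℕ) {m : ℤ} (hm : Odd m) (hk : k ≠ 0) :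
    Function.Antiperiodic (fun a : ℕ => qp (4 * k) ((a : ℚ) * ((a : ℚ) + m))) (2 * k : ℕ) := by
  obtain ⟨t, rfl⟩ := hm
  intro a
  have hshift : ((a + 2 * k : ℕ) : ℚ) * (((a + 2 * k : ℕ) : ℚ) + ((2 * t + 1 : ℤ) : ℚ))
      = (a : ℚ) * ((a : ℚ) + ((2 * t + 1 : ℤ) : ℚ))
        + ((4 * k : ℕ) : ℚ) * (((a + k + t : ℤ) : ℚ) + 1 / 2) := by
    push_cast
    ring
  simp only [hshift, qp_add, qp_natCast_mul_add_half (by positivity : 4 * k ≠ 0), mul_neg_one]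

lemma GaussG_eq_zero {N : ℕ} {m : ℤ} (hN : 4 ∣ N) (hm : Odd m) : GaussG N m = 0 := by
  obtain ⟨k, rfl⟩ := hN
  rcases eq_or_ne k 0 with rfl | hk
  · simp [GaussG]
  rw [GaussG, Fin.sum_univ_eq_sum_range (fun a : ℕ => qp (4 * k) ((a : ℚ) * ((a : ℚ) + m))),
    show range (4 * k) = range (2 * (2 * k)) by ring_nf]
  exact (antiperiodic_qp_mul_add k hm hk).sum_range_two_mul_eq_zero

lemma sumX_eq_prod (n N M : ℕ) :
    sumX n N M = ∏ j, ∑ a : Fin M, qp N ((a : ℚ) * ((a : ℚ) + 2 * rhoV n j)) := by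
  rw [Fintype.prod_sum, sumX]
  refine sum_congr rfl fun mu _ => ?_
  rw [dotp, qp_sum]
  simp [finC]

lemma two_mul_rhoV (n : ℕ) (j : Fin n) : 2 * rhoV n j = ((2 * ((n : ℤ) - j - 1) + 1 : ℤ) : ℚ) := by
  simp only [rhoV]
  push_cast
  ring

theorem sumX_vanishes_general (n N : ℕ) (hn : 1 ≤ n) (hN4 : 4 ∣ N) :
    sumX n N N = 0 := by
  rw [sumX_eq_prod]
  refine prod_eq_zero (mem_univ ⟨0, hn⟩) ?_
  rw [two_mul_rhoV]
  exact GaussG_eq_zero hN4 (odd_two_mul_add_one _)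

/-- For `n ≥ 1` and `N` a positive multiple of 4,
`Σ_{μ∈X_N} q^{(μ,μ+2ρ)} = 0`. -/
theorem sumX_vanishes (n N : ℕ) (hn : 1 ≤ n) (hNpos : 1 ≤ N) (hN4 : 4 ∣ N) :
    sumX n N N = 0 :=
  sumX_vanishes_general n N hn hN4
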